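/- arXiv:2206.10017 — 2 statements merged into one kernel-verified Lean document; each statement's English description precedes it below -/
import Mathlib

section
/- Let B be a bumpless pipe dream of size n. If B has a j-elbow tile at position (i,k), then there exist indices a, b, c, d with i ≤ a < c ≤ n and k ≤ b < d ≤ n such that w_B(a) = d and w_B(c) = b. -/
/-!
Formalization of bumpless pipe dreams (BPDs).

A bumpless pipe dream of size `n` assigns one of six tiles (blank, horizontal,
vertical, crossing, r-elbow, j-elbow) to each cell of the `n × n` grid, subject
to matching and boundary conditions.  We additionally include a `bump` tile
(an r-elbow together with a j-elbow in one cell), which is used only in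
K-theoretic resolutions of BPDs.
-/

/-- The tile types: the six BPD tiles together with the bump tile used in
K-theoretic resolutions. -/
inductive Tile : Type
  | blank | horiz | vert | cross | bump | relbow | jelbow
  deriving DecidableEq

namespace Tile

/-- Does a pipe segment meet the south edge of the tile? -/
def south : Tile → Bool
  | vert => true | cross => true | bump => true | relbow => true
  | _ => false

/-- Does a pipe segment meet the north edge of the tile? -/
def north : Tile → Bool
  | vert => true | cross => true | bump => true | jelbow => true
  | _ => false

/-- Does a pipe segment meet the west edge of the tile? -/
def west : Tile → Bool
  | horiz => true | cross => true | bump => true | jelbow => true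
  | _ => false

/-- Does a pipe segment meet the east edge of the tile? -/
def east : Tile → Bool
  | horiz => true | cross => true | bump => true | relbow => true
  | _ => false

/-- A pipe entering the tile `t` (from the south if `d = true`, from the west if
`d = false`) exits through the east edge; otherwise it exits through the north
edge. -/
def exitEast (t : Tile) (d : Bool) : Bool :=
  if d then (t == relbow || t == bump) else !(t == jelbow || t == bump)

end Tile

/-- A tile diagram of size `n`: an assignment of a tile to each cell `(i, j)`
(row `i` from the top, column `j` from the left, `0`-indexed) of the `n × n`
grid, such that adjacent tiles match along shared edges, a segment meets the
south boundary edge of every column and the east boundary edge of every row,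
and no segment meets the north or west boundary of the grid.  (Cells outside
the grid are blank, as a normalization.)  A diagram may use the `bump` tile;
honest bumpless pipe dreams (`BPD`) do not. -/
structure Diagram (n : ℕ) : Type where
  tile : ℕ → ℕ → Tile
  vmatch : ∀ i j, i + 1 < n → j < n → (tile i j).south = (tile (i + 1) j).north
  hmatch : ∀ i j, i < n → j + 1 < n → (tile i j).east = (tile i (j + 1)).west
  bottom : ∀ j, j < n → (tile (n - 1) j).south = true
  right : ∀ i, i < n → (tile i (n - 1)).east = true
  top : ∀ j, j < n → (tile 0 j).north = false
  left : ∀ i, i < n → (tile i 0).west = false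
  outside : ∀ i j, ¬(i < n ∧ j < n) → tile i j = Tile.blank

/-- A bumpless pipe dream of size `n`: a diagram using only the six BPD tiles
(no bump tiles). -/
structure BPD (n : ℕ) extends Diagram n where
  nobump : ∀ i j, tile i j ≠ Tile.bump

namespace Diagram

variable {n : ℕ}

/-- One step of a pipe: a pipe currently in cell `(σ.1, σ.2.1)`, having entered
from the south if `σ.2.2 = true` (from the west otherwise), moves to the next
cell (east, entering from the west; or north, entering from the south). -/
def Step (D : Diagram n) (σ σ' : ℕ × ℕ × Bool) : Prop :=
  σ.1 < n ∧ σ.2.1 < n ∧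
    (if (D.tile σ.1 σ.2.1).exitEast σ.2.2 then
        σ.2.1 + 1 < n ∧ σ' = (σ.1, σ.2.1 + 1, false)
      else
        0 < σ.1 ∧ σ' = (σ.1 - 1, σ.2.1, true))

/-- The pipe entering at the bottom of column `y` passes through the cell `c`. -/
def Passes (D : Diagram n) (y : ℕ) (c : ℕ × ℕ) : Prop :=
  ∃ d : Bool, Relation.ReflTransGen D.Step (n - 1, y, true) (c.1, c.2, d)

/-- The pipe entering at the bottom of column `y` exits at the right of row `x`;
that is, `y → x` is a pipe of the diagram. -/
def ExitsAt (D : Diagram n) (y x : ℕ) : Prop :=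
  ∃ d : Bool, Relation.ReflTransGen D.Step (n - 1, y, true) (x, n - 1, d) ∧
    (D.tile x (n - 1)).exitEast d = true

/-- The permutation of the diagram is `w`: for every row `x`, `w x → x` is a
pipe of the diagram. -/
def HasPerm (D : Diagram n) (w : Equiv.Perm (Fin n)) : Prop :=
  ∀ x : Fin n, D.ExitsAt (w x) x

/-- The set of crossing tiles shared by the pipes entering at the bottoms of
columns `y₁` and `y₂`. -/
def SharedCrossings (D : Diagram n) (y₁ y₂ : ℕ) : Set (ℕ × ℕ) :=
  {c | D.tile c.1 c.2 = Tile.cross ∧ D.Passes y₁ c ∧ D.Passes y₂ c}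

/-- The diagram is reduced: any two distinct pipes pass through at most one
common crossing tile. -/
def Reduced (D : Diagram n) : Prop :=
  ∀ y₁ y₂, y₁ < n → y₂ < n → y₁ ≠ y₂ → (D.SharedCrossings y₁ y₂).Subsingleton

/-- `y → x` is a removable pipe of the diagram: it is a pipe, the tile at
`(x, y)` is an r-elbow, and it is the only r-elbow tile in row `x` and also the
only r-elbow tile in column `y`. -/
def RemovablePipe (D : Diagram n) (y x : ℕ) : Prop :=
  D.ExitsAt y x ∧ D.tile x y = Tile.relbow ∧
    (∀ j, j ≠ y → D.tile x j ≠ Tile.relbow) ∧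
    (∀ i, i ≠ x → D.tile i y ≠ Tile.relbow)

/-- The diagram is minimal: it has no removable pipe. -/
def Minimal (D : Diagram n) : Prop := ∀ y x, ¬ D.RemovablePipe y x

/-- The number of j-elbow tiles of the diagram. -/
def jcount (D : Diagram n) : ℕ :=
  ((Finset.range n ×ˢ Finset.range n).filter
    (fun c => D.tile c.1 c.2 = Tile.jelbow)).card

end Diagram

namespace BPD

variable {n m : ℕ}

/-- `B ∈ BPD(w; v)` for the subword `v` of `w` with (strictly increasing) index
sequence `s : Fin m ↪o Fin n`: the permutation of `B` is `w` and the removable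
pipes of `B` are precisely the pipes `w k → k` for the indices `k` of `w` not
used by the subword. -/
def InBPDv (B : BPD n) (w : Equiv.Perm (Fin n)) (s : Fin m ↪o Fin n) : Prop :=
  B.toDiagram.HasPerm w ∧
    ∀ y x : ℕ, B.toDiagram.RemovablePipe y x ↔
      ∃ k : Fin n, k ∉ Set.range s ∧ x = (k : ℕ) ∧ y = (w k : ℕ)

end BPD

/-- `c` comes strictly before `c'` in the (weakly north-east) traversal order of
a pipe: `c` is weakly south-west of `c'` and is a different cell. -/
def Before (c c' : ℕ × ℕ) : Prop := c'.1 ≤ c.1 ∧ c.2 ≤ c'.2 ∧ c ≠ c'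

namespace Diagram

/-- The pipes entering in columns `y₁` and `y₂` pass through a common crossing
tile strictly before the cell `c`. -/
def CrossedBefore {n : ℕ} (D : Diagram n) (y₁ y₂ : ℕ) (c : ℕ × ℕ) : Prop :=
  ∃ c' ∈ D.SharedCrossings y₁ y₂, Before c' c

end Diagram

/-- `D` is the K-theoretic resolution `B_K` of the bumpless pipe dream `B`:
each crossing tile of `B` either remains a crossing or becomes a bump in `D`
(all other tiles are unchanged), any two pipes of `D` cross at most once, and at
a former crossing tile the two pipes of `D` passing through it bounce (bump)
there exactly when they have already crossed before reaching it. -/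
structure IsKRes {n : ℕ} (B : BPD n) (D : Diagram n) : Prop where
  agree : ∀ i j, B.tile i j ≠ Tile.cross → D.tile i j = B.tile i j
  res : ∀ i j, B.tile i j = Tile.cross →
    D.tile i j = Tile.cross ∨ D.tile i j = Tile.bump
  once : D.Reduced
  bump_iff : ∀ i j y₁ y₂, y₁ < n → y₂ < n → y₁ ≠ y₂ →
    D.Passes y₁ (i, j) → D.Passes y₂ (i, j) → B.tile i j = Tile.cross →
    (D.tile i j = Tile.bump ↔ D.CrossedBefore y₁ y₂ (i, j))

/-- The permutation `w` contains the pattern `p`. -/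
def PermContains {n k : ℕ} (w : Equiv.Perm (Fin n)) (p : Equiv.Perm (Fin k)) : Prop :=
  ∃ f : Fin k ↪o Fin n, ∀ a b : Fin k, p a < p b ↔ w (f a) < w (f b)

/-- The pattern `1243` (as a permutation of `Fin 4`, `0`-indexed). -/
def p1243 : Equiv.Perm (Fin 4) := Equiv.swap 2 3

/-- The pattern `2143` (as a permutation of `Fin 4`, `0`-indexed). -/
def p2143 : Equiv.Perm (Fin 4) := Equiv.swap 0 1 * Equiv.swap 2 3
section Aux

variable {n : ℕ}


lemma Tile.relbow_of_sn (t : Tile) (hs : t.south = true) (hn : t.north = false)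
    (hb : t ≠ Tile.bump) : t = Tile.relbow := by
  cases t <;> simp_all [Tile.south, Tile.north]

lemma Tile.relbow_of_ew (t : Tile) (he : t.east = true) (hw : t.west = false)
    (hb : t ≠ Tile.bump) : t = Tile.relbow := by
  cases t <;> simp_all [Tile.east, Tile.west]

lemma Tile.south_of_north (t : Tile) (h1 : t.north = true) (hj : t ≠ Tile.jelbow)
    (hb : t ≠ Tile.bump) : t.south = true := by
  cases t <;> simp_all [Tile.north, Tile.south]

lemma Tile.exitEast_true_eq_false (t : Tile) (h1 : t.north = true)
    (hb : t ≠ Tile.bump) : t.exitEast true = false := by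
  cases t <;> simp_all [Tile.north, Tile.exitEast]

lemma Tile.exitEast_false_eq_true (t : Tile) (hj : t ≠ Tile.jelbow)
    (hb : t ≠ Tile.bump) : t.exitEast false = true := by
  cases t <;> simp_all [Tile.exitEast]

lemma Diagram.step_rightUnique (D : Diagram n) : Relator.RightUnique D.Step := by
  rintro σ τ τ' ⟨h1, h2, h3⟩ ⟨h1', h2', h3'⟩
  split_ifs at h3 h3' with h
  · exact h3.2.trans h3'.2.symm
  · exact h3.2.trans h3'.2.symm


lemma Diagram.step_north (D : Diagram n) {r c : ℕ} {d : Bool} (hr : r + 1 < n) (hc : c < n)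
    (h : (D.tile (r+1) c).exitEast d = false) : D.Step (r+1, c, d) (r, c, true) := by
  refine ⟨hr, hc, ?_⟩
  rw [if_neg (by simp [h])]
  exact ⟨Nat.succ_pos r, by simp⟩

lemma Diagram.step_east (D : Diagram n) {r c : ℕ} {d : Bool} (hr : r < n) (hc : c + 1 < n)
    (h : (D.tile r c).exitEast d = true) : D.Step (r, c, d) (r, c+1, false) := by
  refine ⟨hr, ?_, ?_⟩
  · show c < n
    omega
  · rw [if_pos (by simpa using h)]
    exact ⟨hc, rfl⟩

lemma Diagram.exitsAt_unique (D : Diagram n) {y x x' : ℕ}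
    (h : D.ExitsAt y x) (h' : D.ExitsAt y x') : x = x' := by
  obtain ⟨d, hc, he⟩ := h
  obtain ⟨d', hc', he'⟩ := h'
  have key : ∀ {a b : ℕ} {da db : Bool}, (D.tile a (n-1)).exitEast da = true →
      Relation.ReflTransGen D.Step (a, n-1, da) (b, n-1, db) → a = b := by
    intro a b da db hea hab
    rcases (Relation.ReflTransGen.cases_head hab) with heq | ⟨τ, hstep, _⟩
    · simpa using congrArg Prod.fst heq
    · obtain ⟨ha, hb, hif⟩ := hstep
      rw [if_pos hea] at hif
      have h5 : n - 1 + 1 < n := hif.1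
      have h6 : a < n := ha
      omega
  rcases Relation.ReflTransGen.total_of_right_unique D.step_rightUnique hc hc' with h2 | h2
  · exact key he h2
  · exact (key he' h2).symm

lemma BPD.key {n : ℕ} (B : BPD n) (w : Equiv.Perm (Fin n)) (hw : B.toDiagram.HasPerm w) :
    ∀ M ι κ, n - ι + (n - κ) ≤ M → ι < n → κ < n → B.tile ι κ = Tile.jelbow →
    ∃ a b c d : Fin n, ι ≤ (a : ℕ) ∧ a < c ∧ κ ≤ (b : ℕ) ∧ b < d ∧ w a = d ∧ w c = b := by
  intro M
  induction M with
  | zero => intro ι κ hM hι hκ _; omega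
  | succ M IH =>
    intro ι κ hM hι hκ hj
    classical
    have hιn : ι < n - 1 := by
      by_contra h
      have heq : ι = n - 1 := by omega
      have hb := B.bottom κ hκ
      rw [← heq, hj] at hb
      simp [Tile.south] at hb
    have hκn : κ < n - 1 := by
      by_contra h
      have heq : κ = n - 1 := by omega
      have hb := B.right ι hι
      rw [← heq, hj] at hb
      simp [Tile.east] at hb
    -- Hook A : down column κ
    have hexρ : ∃ r, ι < r ∧ r < n ∧ (B.tile r κ).south = true :=
      ⟨n-1, by omega, by omega, B.bottom κ hκ⟩
    set ρ := Nat.find hexρ with hρdef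
    obtain ⟨hιρ, hρn, hρs⟩ := Nat.find_spec hexρ
    have hρmin : ∀ r, r < ρ → ¬(ι < r ∧ r < n ∧ (B.tile r κ).south = true) :=
      fun r hr => Nat.find_min hexρ hr
    have hρnorth : (B.tile ρ κ).north = false := by
      have hv := B.vmatch (ρ-1) κ (by omega) hκ
      have h1 : ρ - 1 + 1 = ρ := by omega
      rw [h1] at hv
      rw [← hv]
      rcases Nat.lt_or_ge ι (ρ - 1) with h | h
      · have := hρmin (ρ-1) (by omega)
        by_contra hcon
        simp only [Bool.not_eq_false] at hcon
        exact this ⟨h, by omega, hcon⟩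
      · have heq : ρ - 1 = ι := by omega
        rw [heq, hj]; rfl
    have hρrel : B.tile ρ κ = Tile.relbow :=
      Tile.relbow_of_sn _ hρs hρnorth (B.nobump ρ κ)
    by_cases hA : ∃ r, ρ < r ∧ r < n ∧ B.tile r κ = Tile.jelbow
    · obtain ⟨r, hr1, hr2, hr3⟩ := hA
      obtain ⟨a, b, c, d, h1, h2, h3, h4, h5, h6⟩ := IH r κ (by omega) hr2 hκ hr3
      exact ⟨a, b, c, d, by omega, h2, h3, h4, h5, h6⟩
    push_neg at hA
    by_cases hA2 : ∃ c, κ < c ∧ c < n ∧ B.tile ρ c = Tile.jelbow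
    · obtain ⟨c, hc1, hc2, hc3⟩ := hA2
      obtain ⟨a, b, c', d, h1, h2, h3, h4, h5, h6⟩ := IH ρ c (by omega) hρn hc2 hc3
      exact ⟨a, b, c', d, by omega, h2, by omega, h4, h5, h6⟩
    push_neg at hA2
    have hSouthA : ∀ r, ρ ≤ r → r < n → (B.tile r κ).south = true := by
      intro r hr
      induction r, hr using Nat.le_induction with
      | base => intro _; exact hρs
      | succ r hr ih =>
        intro hrn
        have hsr : (B.tile r κ).south = true := ih (by omega)
        have hv := B.vmatch r κ (by omega) hκ
        have hnorth : (B.tile (r+1) κ).north = true := hv.symm.trans hsr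
        exact Tile.south_of_north _ hnorth (hA (r+1) (by omega) hrn) (B.nobump (r+1) κ)
    have hClimbA : ∀ r, ρ ≤ r → r < n →
        Relation.ReflTransGen B.toDiagram.Step (r, κ, true) (ρ, κ, true) := by
      intro r hr
      induction r, hr using Nat.le_induction with
      | base => intro _; exact Relation.ReflTransGen.refl
      | succ r hr ih =>
        intro hrn
        have hnorth : (B.tile (r+1) κ).north = true := by
          have hv := B.vmatch r κ (by omega) hκ
          exact hv.symm.trans (hSouthA r (by omega) (by omega))
        have hexit : (B.tile (r+1) κ).exitEast true = false :=
          Tile.exitEast_true_eq_false _ hnorth (B.nobump (r+1) κ)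
        have hstep : B.toDiagram.Step (r+1, κ, true) (r, κ, true) :=
          B.toDiagram.step_north hrn hκ hexit
        exact Relation.ReflTransGen.head hstep (ih (by omega))
    have hstep0A : B.toDiagram.Step (ρ, κ, true) (ρ, κ+1, false) :=
      B.toDiagram.step_east hρn (by omega) (by rw [hρrel]; rfl)
    have hWalkA : ∀ c, κ+1 ≤ c → c < n →
        Relation.ReflTransGen B.toDiagram.Step (ρ, κ+1, false) (ρ, c, false) := by
      intro c hc
      induction c, hc using Nat.le_induction with
      | base => intro _; exact Relation.ReflTransGen.refl
      | succ c hc ih =>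
        intro hcn
        exact (ih (by omega)).tail (B.toDiagram.step_east hρn hcn
          (Tile.exitEast_false_eq_true _ (hA2 c (by omega) (by omega)) (B.nobump ρ c)))
    have hexitA : B.toDiagram.ExitsAt κ ρ := by
      refine ⟨false, ?_, ?_⟩
      · exact (((hClimbA (n-1) (by omega) (by omega)).tail hstep0A).trans
          (hWalkA (n-1) (by omega) (by omega)))
      · exact Tile.exitEast_false_eq_true _ (hA2 (n-1) (by omega) (by omega))
          (B.nobump ρ (n-1))
    -- Hook B : right along row ι
    have hexc : ∃ c, κ < c ∧ c < n ∧ (B.tile ι c).east = true :=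
      ⟨n-1, by omega, by omega, B.right ι hι⟩
    set c1 := Nat.find hexc with hc1def
    obtain ⟨hκc1, hc1n, hc1e⟩ := Nat.find_spec hexc
    have hc1min : ∀ c, c < c1 → ¬(κ < c ∧ c < n ∧ (B.tile ι c).east = true) :=
      fun c hc => Nat.find_min hexc hc
    have hc1west : (B.tile ι c1).west = false := by
      have hh := B.hmatch ι (c1-1) hι (by omega)
      have h1 : c1 - 1 + 1 = c1 := by omega
      rw [h1] at hh
      rw [← hh]
      rcases Nat.lt_or_ge κ (c1 - 1) with h | h
      · have := hc1min (c1-1) (by omega)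
        by_contra hcon
        simp only [Bool.not_eq_false] at hcon
        exact this ⟨h, by omega, hcon⟩
      · have heq : c1 - 1 = κ := by omega
        rw [heq, hj]; rfl
    have hc1rel : B.tile ι c1 = Tile.relbow :=
      Tile.relbow_of_ew _ hc1e hc1west (B.nobump ι c1)
    by_cases hB : ∃ r, ι < r ∧ r < n ∧ B.tile r c1 = Tile.jelbow
    · obtain ⟨r, hr1, hr2, hr3⟩ := hB
      obtain ⟨a, b, c, d, h1, h2, h3, h4, h5, h6⟩ := IH r c1 (by omega) hr2 hc1n hr3
      exact ⟨a, b, c, d, by omega, h2, by omega, h4, h5, h6⟩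
    push_neg at hB
    by_cases hB2 : ∃ c, c1 < c ∧ c < n ∧ B.tile ι c = Tile.jelbow
    · obtain ⟨c, hc2, hc3, hc4⟩ := hB2
      obtain ⟨a, b, c', d, h1, h2, h3, h4, h5, h6⟩ := IH ι c (by omega) hι hc3 hc4
      exact ⟨a, b, c', d, by omega, h2, by omega, h4, h5, h6⟩
    push_neg at hB2
    have hSouthB : ∀ r, ι ≤ r → r < n → (B.tile r c1).south = true := by
      intro r hr
      induction r, hr using Nat.le_induction with
      | base => intro _; rw [hc1rel]; rfl
      | succ r hr ih =>
        intro hrn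
        have hsr : (B.tile r c1).south = true := ih (by omega)
        have hv := B.vmatch r c1 (by omega) hc1n
        have hnorth : (B.tile (r+1) c1).north = true := hv.symm.trans hsr
        exact Tile.south_of_north _ hnorth (hB (r+1) (by omega) hrn) (B.nobump (r+1) c1)
    have hClimbB : ∀ r, ι ≤ r → r < n →
        Relation.ReflTransGen B.toDiagram.Step (r, c1, true) (ι, c1, true) := by
      intro r hr
      induction r, hr using Nat.le_induction with
      | base => intro _; exact Relation.ReflTransGen.refl
      | succ r hr ih =>
        intro hrn
        have hnorth : (B.tile (r+1) c1).north = true := by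
          have hv := B.vmatch r c1 (by omega) hc1n
          exact hv.symm.trans (hSouthB r (by omega) (by omega))
        have hexit : (B.tile (r+1) c1).exitEast true = false :=
          Tile.exitEast_true_eq_false _ hnorth (B.nobump (r+1) c1)
        have hstep : B.toDiagram.Step (r+1, c1, true) (r, c1, true) :=
          B.toDiagram.step_north hrn hc1n hexit
        exact Relation.ReflTransGen.head hstep (ih (by omega))
    have hexitB : B.toDiagram.ExitsAt c1 ι := by
      rcases Nat.lt_or_ge c1 (n-1) with hlt | hge
      · have hstep0B : B.toDiagram.Step (ι, c1, true) (ι, c1+1, false) :=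
          B.toDiagram.step_east hι (by omega) (by rw [hc1rel]; rfl)
        have hWalkB : ∀ c, c1+1 ≤ c → c < n →
            Relation.ReflTransGen B.toDiagram.Step (ι, c1+1, false) (ι, c, false) := by
          intro c hc
          induction c, hc using Nat.le_induction with
          | base => intro _; exact Relation.ReflTransGen.refl
          | succ c hc ih =>
            intro hcn
            exact (ih (by omega)).tail (B.toDiagram.step_east hι hcn
              (Tile.exitEast_false_eq_true _ (hB2 c (by omega) (by omega)) (B.nobump ι c)))
        refine ⟨false, ?_, ?_⟩
        · exact (((hClimbB (n-1) (by omega) (by omega)).tail hstep0B).trans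
            (hWalkB (n-1) (by omega) (by omega)))
        · exact Tile.exitEast_false_eq_true _ (hB2 (n-1) (by omega) (by omega))
            (B.nobump ι (n-1))
      · have heq : c1 = n - 1 := by omega
        refine ⟨true, ?_, ?_⟩
        · have hcl := hClimbB (n-1) (by omega) (by omega)
          rw [heq] at hcl
          rw [heq]
          exact hcl
        · rw [← heq, hc1rel]
          rfl
    have hwρ : w ⟨ρ, hρn⟩ = ⟨κ, hκ⟩ := by
      have h1 := hw (w.symm ⟨κ, hκ⟩)
      rw [Equiv.apply_symm_apply] at h1
      have h2 := B.toDiagram.exitsAt_unique h1 hexitA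
      have h3 : w.symm ⟨κ, hκ⟩ = ⟨ρ, hρn⟩ := Fin.ext h2
      rw [← h3, Equiv.apply_symm_apply]
    have hwι : w ⟨ι, hι⟩ = ⟨c1, hc1n⟩ := by
      have h1 := hw (w.symm ⟨c1, hc1n⟩)
      rw [Equiv.apply_symm_apply] at h1
      have h2 := B.toDiagram.exitsAt_unique h1 hexitB
      have h3 : w.symm ⟨c1, hc1n⟩ = ⟨ι, hι⟩ := Fin.ext h2
      rw [← h3, Equiv.apply_symm_apply]
    exact ⟨⟨ι, hι⟩, ⟨κ, hκ⟩, ⟨ρ, hρn⟩, ⟨c1, hc1n⟩, le_refl _, hιρ, le_refl _, hκc1, hwι, hwρ⟩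

end Aux

/-- Let `B` be a bumpless pipe dream of size `n` with
permutation `w`.  If `B` has a j-elbow tile at position `(i, k)`, then there
exist indices `a, b, c, d` with `i ≤ a < c` and `k ≤ b < d` (all within the
grid) such that `w a = d` and `w c = b`. -/
theorem jelbow_gives_descent_pair {n : ℕ} (B : BPD n)
    (w : Equiv.Perm (Fin n)) (hw : B.toDiagram.HasPerm w)
    (i k : Fin n) (hj : B.tile i k = Tile.jelbow) :
    ∃ a b c d : Fin n, (i : ℕ) ≤ (a : ℕ) ∧ a < c ∧ (k : ℕ) ≤ (b : ℕ) ∧ b < d ∧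
      w a = d ∧ w c = b := by
  obtain ⟨a, b, c, d, h1, h2, h3, h4, h5, h6⟩ :=
    BPD.key B w hw (n - i + (n - k)) i k le_rfl i.isLt k.isLt hj
  exact ⟨a, b, c, d, h1, h2, h3, h4, h5, h6⟩
end

section
/- Let B be a bumpless pipe dream of size n. If y→x is an undrooped pipe of B (its only elbow tile is the r-elbow at (x,y), so it runs straight north along column y and then straight east along row x), then y→x shares at most two crossing tiles with any other pipe of B; moreover, if two pipes of B are both undrooped, they share at most one crossing tile. -/
/-- `y → x` is an undrooped pipe of the diagram: its only elbow tile is the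
r-elbow at `(x, y)` (so it runs straight north along column `y` and then
straight east along row `x`). -/
def Diagram.Undrooped {n : ℕ} (D : Diagram n) (y x : ℕ) : Prop :=
  D.ExitsAt y x ∧ D.tile x y = Tile.relbow ∧
    ∀ c : ℕ × ℕ, D.Passes y c → D.tile c.1 c.2 ≠ Tile.jelbow ∧
      (c ≠ (x, y) → D.tile c.1 c.2 ≠ Tile.relbow)

section UndroopedAux

open Relation

variable {n : ℕ}

private lemma step_east {D : Diagram n} {σ τ : ℕ × ℕ × Bool} (h : D.Step σ τ)
    (hE : (D.tile σ.1 σ.2.1).exitEast σ.2.2 = true) :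
    σ.2.1 + 1 < n ∧ τ = (σ.1, σ.2.1 + 1, false) := by
  obtain ⟨-, -, h3⟩ := h
  simpa [hE] using h3

private lemma step_north {D : Diagram n} {σ τ : ℕ × ℕ × Bool} (h : D.Step σ τ)
    (hE : (D.tile σ.1 σ.2.1).exitEast σ.2.2 = false) :
    0 < σ.1 ∧ τ = (σ.1 - 1, σ.2.1, true) := by
  obtain ⟨-, -, h3⟩ := h
  simpa [hE] using h3

private lemma step_det (D : Diagram n) {σ τ τ' : ℕ × ℕ × Bool}
    (h : D.Step σ τ) (h' : D.Step σ τ') : τ = τ' := by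
  by_cases hE : (D.tile σ.1 σ.2.1).exitEast σ.2.2 = true
  · rw [(step_east h hE).2, (step_east h' hE).2]
  · rw [Bool.not_eq_true] at hE
    rw [(step_north h hE).2, (step_north h' hE).2]

private lemma step_mono (D : Diagram n) {σ τ : ℕ × ℕ × Bool}
    (h : D.Step σ τ) : τ.1 ≤ σ.1 ∧ σ.2.1 ≤ τ.2.1 := by
  by_cases hE : (D.tile σ.1 σ.2.1).exitEast σ.2.2 = true
  · rw [(step_east h hE).2]
    exact ⟨le_refl _, Nat.le_succ _⟩
  · rw [Bool.not_eq_true] at hE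
    rw [(step_north h hE).2]
    exact ⟨Nat.sub_le _ _, le_refl _⟩

private lemma reach_mono (D : Diagram n) {σ τ : ℕ × ℕ × Bool}
    (h : ReflTransGen D.Step σ τ) : τ.1 ≤ σ.1 ∧ σ.2.1 ≤ τ.2.1 := by
  induction h with
  | refl => exact ⟨le_refl _, le_refl _⟩
  | tail _ hstep ih =>
      have := step_mono D hstep
      exact ⟨le_trans this.1 ih.1, le_trans ih.2 this.2⟩

/-- The invariant: in-bounds, and the entering edge carries a segment. -/
private def PInv (B : BPD n) (σ : ℕ × ℕ × Bool) : Prop :=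
  σ.1 < n ∧ σ.2.1 < n ∧
    (σ.2.2 = true → (B.tile σ.1 σ.2.1).south = true) ∧
    (σ.2.2 = false → (B.tile σ.1 σ.2.1).west = true)

private lemma east_of_exit (t : Tile) (d : Bool) (h1 : t ≠ Tile.bump)
    (h2 : t.exitEast d = true) (h3 : d = true → t.south = true)
    (h4 : d = false → t.west = true) : t.east = true := by
  cases t <;> cases d <;> revert h1 h2 h3 h4 <;> decide

private lemma north_of_noexit (t : Tile) (d : Bool) (h1 : t ≠ Tile.bump)
    (h2 : t.exitEast d = false) (h3 : d = true → t.south = true)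
    (h4 : d = false → t.west = true) : t.north = true := by
  cases t <;> cases d <;> revert h1 h2 h3 h4 <;> decide

private lemma dir_unique (t : Tile) (d d' : Bool) (h1 : t ≠ Tile.bump)
    (h2 : t.exitEast d = t.exitEast d')
    (h3 : d = true → t.south = true) (h4 : d = false → t.west = true)
    (h5 : d' = true → t.south = true) (h6 : d' = false → t.west = true) :
    d = d' := by
  cases t <;> cases d <;> cases d' <;> revert h1 h2 h3 h4 h5 h6 <;> decide

private lemma exit_true_of_ne (t : Tile) (h1 : t ≠ Tile.relbow)
    (h2 : t ≠ Tile.bump) : t.exitEast true = false := by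
  cases t <;> revert h1 h2 <;> decide

private lemma exit_false_of_ne (t : Tile) (h1 : t ≠ Tile.jelbow)
    (h2 : t ≠ Tile.bump) : t.exitEast false = true := by
  cases t <;> revert h1 h2 <;> decide

private lemma inv_step (B : BPD n) {σ τ : ℕ × ℕ × Bool}
    (hσ : PInv B σ) (h : B.toDiagram.Step σ τ) : PInv B τ := by
  obtain ⟨hr, hc, hs, hw⟩ := hσ
  have hnb := B.nobump σ.1 σ.2.1
  by_cases hE : (B.tile σ.1 σ.2.1).exitEast σ.2.2 = true
  · obtain ⟨hb, rfl⟩ := step_east h hE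
    have heast := east_of_exit _ _ hnb hE hs hw
    refine ⟨hr, hb, ?_, ?_⟩
    · intro h'; exact absurd h' (by simp)
    · intro _
      have hm := B.hmatch σ.1 σ.2.1 hr hb
      show (B.tile σ.1 (σ.2.1 + 1)).west = true
      rw [← hm, heast]
  · rw [Bool.not_eq_true] at hE
    obtain ⟨hb, rfl⟩ := step_north h hE
    have hnorth := north_of_noexit _ _ hnb hE hs hw
    refine ⟨by omega, hc, ?_, ?_⟩
    · intro _
      have hm := B.vmatch (σ.1 - 1) σ.2.1 (by omega) hc
      rw [Nat.sub_add_cancel (by omega : 1 ≤ σ.1)] at hm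
      show (B.tile (σ.1 - 1) σ.2.1).south = true
      rw [hm, hnorth]
    · intro h'; exact absurd h' (by simp)

private lemma inv_reach (B : BPD n) {σ τ : ℕ × ℕ × Bool}
    (hσ : PInv B σ) (h : ReflTransGen B.toDiagram.Step σ τ) : PInv B τ := by
  induction h with
  | refl => exact hσ
  | tail _ hstep ih => exact inv_step B ih hstep

private lemma step_back_det (B : BPD n) {σ σ' τ : ℕ × ℕ × Bool}
    (hσ : PInv B σ) (hσ' : PInv B σ') (h : B.toDiagram.Step σ τ)
    (h' : B.toDiagram.Step σ' τ) : σ = σ' := by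
  obtain ⟨hr, hc, hs, hw⟩ := hσ
  obtain ⟨hr', hc', hs', hw'⟩ := hσ'
  have hnb := B.nobump σ.1 σ.2.1
  by_cases hE : (B.tile σ.1 σ.2.1).exitEast σ.2.2 = true <;>
    by_cases hE' : (B.tile σ'.1 σ'.2.1).exitEast σ'.2.2 = true
  · obtain ⟨-, rfl⟩ := step_east h hE
    have h4 := (step_east h' hE').2
    simp only [Prod.mk.injEq] at h4
    obtain ⟨e1, e2, -⟩ := h4
    have e2' : σ.2.1 = σ'.2.1 := by omega
    have ht : B.tile σ'.1 σ'.2.1 = B.tile σ.1 σ.2.1 := by rw [e1, e2']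
    rw [ht] at hE' hs' hw'
    have e3 : σ.2.2 = σ'.2.2 :=
      dir_unique _ _ _ hnb (by rw [hE, hE']) hs hw hs' hw'
    exact Prod.ext e1 (Prod.ext e2' e3)
  · obtain ⟨-, rfl⟩ := step_east h hE
    rw [Bool.not_eq_true] at hE'
    have h4 := (step_north h' hE').2
    simp only [Prod.mk.injEq] at h4
    exact absurd h4.2.2 (by simp)
  · rw [Bool.not_eq_true] at hE
    obtain ⟨-, rfl⟩ := step_north h hE
    have h4 := (step_east h' hE').2
    simp only [Prod.mk.injEq] at h4
    exact absurd h4.2.2 (by simp)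
  · rw [Bool.not_eq_true] at hE hE'
    obtain ⟨hp, rfl⟩ := step_north h hE
    obtain ⟨hp', h4⟩ := step_north h' hE'
    simp only [Prod.mk.injEq] at h4
    obtain ⟨e1, e2, -⟩ := h4
    have e1' : σ.1 = σ'.1 := by
      have m1 := h.1
      have m2 := h'.1
      omega
    have ht : B.tile σ'.1 σ'.2.1 = B.tile σ.1 σ.2.1 := by rw [e1', e2]
    rw [ht] at hE' hs' hw'
    have e3 : σ.2.2 = σ'.2.2 :=
      dir_unique _ _ _ hnb (by rw [hE, hE']) hs hw hs' hw'
    exact Prod.ext e1' (Prod.ext e2 e3)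

private lemma back_comp (B : BPD n) {a c : ℕ × ℕ × Bool}
    (h1 : ReflTransGen B.toDiagram.Step a c) (ha : PInv B a) :
    ∀ b, PInv B b → ReflTransGen B.toDiagram.Step b c →
      ReflTransGen B.toDiagram.Step a b ∨ ReflTransGen B.toDiagram.Step b a := by
  induction h1 with
  | refl => exact fun b _ h2 => Or.inr h2
  | tail h1 hstep ih =>
      intro b hb h2
      rcases h2.cases_tail with rfl | ⟨m', h2', hstep'⟩
      · exact Or.inl (h1.tail hstep)
      · have hm := inv_reach B ha h1
        have hm' := inv_reach B hb h2'
        have := step_back_det B hm hm' hstep hstep'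
        subst this
        exact ih b hb h2'

private lemma fwd_comp (D : Diagram n) {a c : ℕ × ℕ × Bool}
    (h1 : ReflTransGen D.Step a c) :
    ∀ d, ReflTransGen D.Step a d →
      ReflTransGen D.Step c d ∨ ReflTransGen D.Step d c := by
  induction h1 using Relation.ReflTransGen.head_induction_on with
  | refl => exact fun d h2 => Or.inl h2
  | head hstep h1 ih =>
      intro d h2
      rcases h2.cases_head with rfl | ⟨m', hstep', h2'⟩
      · exact Or.inr (ReflTransGen.head hstep h1)
      · have := step_det D hstep hstep'
        subst this
        exact ih d h2'

private lemma inv_start (B : BPD n) {y : ℕ} (hy : y < n) :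
    PInv B (n - 1, y, true) :=
  ⟨by omega, hy, fun _ => B.bottom y hy, fun h => by simp at h⟩

private lemma no_step_to_start (D : Diagram n) {y' : ℕ} {b : ℕ × ℕ × Bool}
    (h : D.Step b (n - 1, y', true)) : False := by
  have hb := h.1
  by_cases hE : (D.tile b.1 b.2.1).exitEast b.2.2 = true
  · have h4 := (step_east h hE).2
    simp only [Prod.mk.injEq] at h4
    exact absurd h4.2.2 (by simp)
  · rw [Bool.not_eq_true] at hE
    obtain ⟨hp, h4⟩ := step_north h hE
    simp only [Prod.mk.injEq] at h4
    omega

private lemma disjoint_starts (B : BPD n) {y y' : ℕ} (hy : y < n) (hy' : y' < n)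
    (hne : y ≠ y') {τ : ℕ × ℕ × Bool}
    (h : ReflTransGen B.toDiagram.Step (n - 1, y, true) τ)
    (h' : ReflTransGen B.toDiagram.Step (n - 1, y', true) τ) : False := by
  have hcomp := back_comp B h (inv_start B hy) _ (inv_start B hy') h'
  rcases hcomp with hc | hc <;>
  · rcases hc.cases_tail with heq | ⟨b, -, hstep⟩
    · simp only [Prod.mk.injEq] at heq
      exact hne (by omega)
    · exact no_step_to_start _ hstep

private lemma und_lt (B : BPD n) {y x : ℕ} (hund : B.toDiagram.Undrooped y x) :
    x < n ∧ y < n := by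
  by_contra h
  have := B.outside x y (by tauto)
  rw [hund.2.1] at this
  exact Tile.noConfusion this

private lemma traj (B : BPD n) {y x : ℕ} (hund : B.toDiagram.Undrooped y x)
    {τ : ℕ × ℕ × Bool}
    (h : ReflTransGen B.toDiagram.Step (n - 1, y, true) τ) :
    (τ.2.1 = y ∧ τ.2.2 = true ∧ x ≤ τ.1 ∧ τ.1 ≤ n - 1) ∨
    (τ.1 = x ∧ τ.2.2 = false ∧ y < τ.2.1 ∧ τ.2.1 ≤ n - 1) := by
  obtain ⟨hx, hy⟩ := und_lt B hund
  induction h with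
  | refl => exact Or.inl ⟨rfl, rfl, by omega, le_refl _⟩
  | tail h1 hstep ih =>
      rename_i b τ
      have hp : B.toDiagram.Passes y (b.1, b.2.1) := ⟨b.2.2, h1⟩
      rcases ih with ⟨hcy, hd, hxi, hin⟩ | ⟨hbx, hd, hyj, hjn⟩
      · by_cases hbx : b.1 = x
        · have hE : (B.tile b.1 b.2.1).exitEast b.2.2 = true := by
            rw [hbx, hcy, hund.2.1, hd]; rfl
          obtain ⟨hb2, rfl⟩ := step_east hstep hE
          refine Or.inr ⟨hbx, rfl, ?_, ?_⟩
          · show y < b.2.1 + 1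
            omega
          · show b.2.1 + 1 ≤ n - 1
            omega
        · have hnr : B.tile b.1 b.2.1 ≠ Tile.relbow := by
            refine (hund.2.2 (b.1, b.2.1) hp).2 ?_
            intro hceq
            exact hbx (congrArg Prod.fst hceq)
          have hE : (B.tile b.1 b.2.1).exitEast b.2.2 = false := by
            rw [hd]; exact exit_true_of_ne _ hnr (B.nobump _ _)
          obtain ⟨hb0, rfl⟩ := step_north hstep hE
          refine Or.inl ⟨hcy, rfl, ?_, ?_⟩
          · show x ≤ b.1 - 1
            omega
          · show b.1 - 1 ≤ n - 1
            omega
      · have hnj : B.tile b.1 b.2.1 ≠ Tile.jelbow := (hund.2.2 (b.1, b.2.1) hp).1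
        have hE : (B.tile b.1 b.2.1).exitEast b.2.2 = true := by
          rw [hd]; exact exit_false_of_ne _ hnj (B.nobump _ _)
        obtain ⟨hb2, rfl⟩ := step_east hstep hE
        refine Or.inr ⟨hbx, rfl, ?_, ?_⟩
        · show y < b.2.1 + 1
          omega
        · show b.2.1 + 1 ≤ n - 1
          omega

/-- Characterization of crossing tiles on an undrooped pipe. -/
private lemma cross_char (B : BPD n) {y x : ℕ} (hund : B.toDiagram.Undrooped y x)
    {c : ℕ × ℕ} (hpass : B.toDiagram.Passes y c)
    (hcross : B.tile c.1 c.2 = Tile.cross) :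
    (c.2 = y ∧ x < c.1 ∧
        ReflTransGen B.toDiagram.Step (n - 1, y, true) (c.1, c.2, true)) ∨
    (c.1 = x ∧ y < c.2 ∧
        ReflTransGen B.toDiagram.Step (n - 1, y, true) (c.1, c.2, false)) := by
  obtain ⟨d, hreach⟩ := hpass
  rcases traj B hund hreach with ⟨h1, h2, h3, h4⟩ | ⟨h1, h2, h3, h4⟩
  · left
    simp only at h1 h2 h3 h4
    refine ⟨h1, ?_, by rwa [h2] at hreach⟩
    rcases Nat.lt_or_ge x c.1 with h | h
    · exact h
    · exfalso
      have hcx : c.1 = x := by omega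
      rw [hcx, h1, hund.2.1] at hcross
      exact Tile.noConfusion hcross
  · right
    simp only at h1 h2 h3 h4
    exact ⟨h1, h3, by rwa [h2] at hreach⟩

end UndroopedAux

/-- Let `B` be a bumpless pipe dream of size `n`.  If
`y → x` is an undrooped pipe of `B` (its only elbow tile is the r-elbow at
`(x, y)`), then `y → x` shares at most two crossing tiles with any other pipe
`y' → x'` of `B`; moreover, if the other pipe is also undrooped, they share at
most one crossing tile. -/
theorem undrooped_crossing_bounds {n : ℕ} (B : BPD n) (y x : ℕ)
    (hy : y < n) (hund : B.toDiagram.Undrooped y x)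
    (y' x' : ℕ) (hy' : y' < n) (hpipe : B.toDiagram.ExitsAt y' x')
    (hne : y ≠ y') :
    (B.toDiagram.SharedCrossings y y').ncard ≤ 2 ∧
      (B.toDiagram.Undrooped y' x' →
        (B.toDiagram.SharedCrossings y y').ncard ≤ 1) := by
  classical
  obtain ⟨hx, -⟩ := und_lt B hund
  set S := B.toDiagram.SharedCrossings y y' with hS
  -- at most one shared crossing in column y
  have colkey : ∀ i i' : ℕ, B.tile i y = Tile.cross →
      Relation.ReflTransGen B.toDiagram.Step (i, y, false) (i', y, false) →
      i = i' := by
    intro i i' hc hr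
    by_contra hne2
    rcases hr.cases_head with heq | ⟨mid, hstep, hrest⟩
    · simp only [Prod.mk.injEq] at heq; omega
    · have hE : (B.tile i y).exitEast false = true := by rw [hc]; rfl
      obtain ⟨-, rfl⟩ := step_east hstep hE
      have h2 : y + 1 ≤ y := (reach_mono B.toDiagram hrest).2
      omega
  have rowkey : ∀ j j' : ℕ, B.tile x j = Tile.cross →
      Relation.ReflTransGen B.toDiagram.Step (x, j, true) (x, j', true) →
      j = j' := by
    intro j j' hc hr
    by_contra hne2
    rcases hr.cases_head with heq | ⟨mid, hstep, hrest⟩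
    · simp only [Prod.mk.injEq] at heq; omega
    · have hE : (B.tile x j).exitEast true = false := by rw [hc]; rfl
      obtain ⟨hp, rfl⟩ := step_north hstep hE
      have h2 : x ≤ x - 1 := (reach_mono B.toDiagram hrest).1
      omega
  -- extraction of data for a shared crossing in column `y`
  have extractV : ∀ a : ℕ × ℕ, a ∈ S → a.2 = y → x < a.1 ∧
      Relation.ReflTransGen B.toDiagram.Step (n - 1, y, true) (a.1, a.2, true) ∧
      Relation.ReflTransGen B.toDiagram.Step (n - 1, y', true) (a.1, a.2, false) := by
    intro a ha hay
    obtain ⟨hcross, hpy, hpy'⟩ := ha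
    rcases cross_char B hund hpy hcross with ⟨-, h2, h3⟩ | ⟨-, h2, -⟩
    · obtain ⟨d', hd'⟩ := hpy'
      cases d' with
      | true => exact (disjoint_starts B hy hy' hne h3 hd').elim
      | false => exact ⟨h2, h3, hd'⟩
    · omega
  have extractH : ∀ a : ℕ × ℕ, a ∈ S → a.2 ≠ y → a.1 = x ∧ y < a.2 ∧
      Relation.ReflTransGen B.toDiagram.Step (n - 1, y, true) (a.1, a.2, false) ∧
      Relation.ReflTransGen B.toDiagram.Step (n - 1, y', true) (a.1, a.2, true) := by
    intro a ha hay
    obtain ⟨hcross, hpy, hpy'⟩ := ha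
    rcases cross_char B hund hpy hcross with ⟨h1, -, -⟩ | ⟨h1, h2, h3⟩
    · exact absurd h1 hay
    · obtain ⟨d', hd'⟩ := hpy'
      cases d' with
      | true => exact ⟨h1, h2, h3, hd'⟩
      | false => exact (disjoint_starts B hy hy' hne h3 hd').elim
  have subV : ∀ a ∈ S, ∀ b ∈ S, a.2 = y → b.2 = y → a = b := by
    intro a ha b hb hay hby
    obtain ⟨hxa, hra, hra'⟩ := extractV a ha hay
    obtain ⟨hxb, hrb, hrb'⟩ := extractV b hb hby
    have htile : B.tile a.1 y = Tile.cross := by rw [← hay]; exact ha.1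
    have htileb : B.tile b.1 y = Tile.cross := by rw [← hby]; exact hb.1
    rw [hay] at hra'
    rw [hby] at hrb'
    have hcomp := fwd_comp B.toDiagram hra' _ hrb'
    have h1 : a.1 = b.1 := by
      rcases hcomp with h | h
      · exact colkey a.1 b.1 htile h
      · exact (colkey b.1 a.1 htileb h).symm
    exact Prod.ext h1 (hay.trans hby.symm)
  have subH : ∀ a ∈ S, ∀ b ∈ S, a.2 ≠ y → b.2 ≠ y → a = b := by
    intro a ha b hb hay hby
    obtain ⟨hxa, hya, hra, hra'⟩ := extractH a ha hay
    obtain ⟨hxb, hyb, hrb, hrb'⟩ := extractH b hb hby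
    have htile : B.tile x a.2 = Tile.cross := by rw [← hxa]; exact ha.1
    have htileb : B.tile x b.2 = Tile.cross := by rw [← hxb]; exact hb.1
    rw [hxa] at hra'
    rw [hxb] at hrb'
    have hcomp := fwd_comp B.toDiagram hra' _ hrb'
    have h2 : a.2 = b.2 := by
      rcases hcomp with h | h
      · exact rowkey a.2 b.2 htile h
      · exact (rowkey b.2 a.2 htileb h).symm
    exact Prod.ext (hxa.trans hxb.symm) h2
  constructor
  · -- part 1
    have hunion : S = {c ∈ S | c.2 = y} ∪ {c ∈ S | c.2 ≠ y} := by
      ext c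
      by_cases h : c.2 = y <;> simp [h]
    have hs1 : ({c ∈ S | c.2 = y} : Set (ℕ × ℕ)).Subsingleton := by
      intro a ha b hb
      exact subV a ha.1 b hb.1 ha.2 hb.2
    have hs2 : ({c ∈ S | c.2 ≠ y} : Set (ℕ × ℕ)).Subsingleton := by
      intro a ha b hb
      exact subH a ha.1 b hb.1 ha.2 hb.2
    have c1 : ({c ∈ S | c.2 = y} : Set (ℕ × ℕ)).ncard ≤ 1 :=
      (Set.ncard_le_one hs1.finite).mpr fun a ha b hb => hs1 ha hb
    have c2 : ({c ∈ S | c.2 ≠ y} : Set (ℕ × ℕ)).ncard ≤ 1 :=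
      (Set.ncard_le_one hs2.finite).mpr fun a ha b hb => hs2 ha hb
    calc S.ncard = ({c ∈ S | c.2 = y} ∪ {c ∈ S | c.2 ≠ y} : Set (ℕ × ℕ)).ncard := by
            rw [← hunion]
      _ ≤ ({c ∈ S | c.2 = y} : Set (ℕ × ℕ)).ncard +
            ({c ∈ S | c.2 ≠ y} : Set (ℕ × ℕ)).ncard := Set.ncard_union_le _ _
      _ ≤ 2 := by omega
  · -- part 2
    intro hund'
    obtain ⟨hx', -⟩ := und_lt B hund'
    have key2 : ∀ c ∈ S, (c = (x', y) ∧ x < x') ∨ (c = (x, y') ∧ x' < x) := by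
      intro c hc
      obtain ⟨hcr, hp, hp'⟩ := hc
      rcases cross_char B hund hp hcr with ⟨ha1, ha2, ha3⟩ | ⟨ha1, ha2, ha3⟩ <;>
        rcases cross_char B hund' hp' hcr with ⟨hb1, hb2, hb3⟩ | ⟨hb1, hb2, hb3⟩
      · exact absurd (ha1.symm.trans hb1) hne
      · exact Or.inl ⟨Prod.ext hb1 ha1, hb1 ▸ ha2⟩
      · exact Or.inr ⟨Prod.ext ha1 hb1, ha1 ▸ hb2⟩
      · exact (disjoint_starts B hy hy' hne ha3 hb3).elim
    have hsub : S.Subsingleton := by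
      intro a ha b hb
      rcases key2 a ha with ⟨ea, h1⟩ | ⟨ea, h1⟩ <;>
        rcases key2 b hb with ⟨eb, h2⟩ | ⟨eb, h2⟩
      · exact ea.trans eb.symm
      · omega
      · omega
      · exact ea.trans eb.symm
    exact (Set.ncard_le_one hsub.finite).mpr fun a ha b hb => hsub ha hb
end
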